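/- Let σ: 𝒜 → ℬ⁺ be a non-erasing morphism between finite alphabets, let y ∈ ℬ^ℤ be an aperiodic point, and let (k,x), (k',x') be centered σ-representations of y with x' = T^ℓ(x) for some ℓ ∈ ℤ. Then (k,x) = (k',x'): aperiodic points have a unique centered σ-representation along a shift orbit. -/

import Mathlib

open scoped BigOperators

namespace Recog

variable {A B C : Type*}

/-- A morphism assigning a word to each letter is non-erasing if every image is nonempty. -/
def NonErasing (σ : A → List B) : Prop := ∀ a, σ a ≠ []

/-- Apply a morphism letterwise to a finite word, concatenating the images. -/
def wordApply (σ : A → List B) : List A → List B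
  | [] => []
  | a :: w => σ a ++ wordApply σ w

/-- Composition of morphisms `τ ∘ σ`. -/
def comp (τ : B → List C) (σ : A → List B) : A → List C := fun a => wordApply τ (σ a)

/-- The `ℓ`-th cutting point of the representation `(0, x)`:
`|σ(x_[0,ℓ))|` for `ℓ ≥ 0` and `-|σ(x_[ℓ,0))|` for `ℓ < 0`. -/
def cut (σ : A → List B) (x : ℤ → A) (ℓ : ℤ) : ℤ :=
  if 0 ≤ ℓ then ∑ i ∈ Finset.range ℓ.toNat, ((σ (x i)).length : ℤ)
  else -∑ i ∈ Finset.range (-ℓ).toNat, ((σ (x (-(i : ℤ) - 1))).length : ℤ)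

/-- `y` is the bi-infinite image `σ(x)`, where `σ(x₀)` starts at position `0`. -/
def IsSubstPt (σ : A → List B) (x : ℤ → A) (y : ℤ → B) : Prop :=
  ∀ (ℓ : ℤ) (j : ℕ) (hj : j < (σ (x ℓ)).length),
    y (cut σ x ℓ + j) = (σ (x ℓ)).get ⟨j, hj⟩

/-- `(k, x)` is a `σ`-representation of `y`, i.e. `y = T^k σ(x)`. -/
def IsRep (σ : A → List B) (y : ℤ → B) (k : ℤ) (x : ℤ → A) : Prop :=
  IsSubstPt σ x fun n => y (n - k)

/-- `(k, x)` is a centered `σ`-representation of `y`: `y = T^k σ(x)` with `0 ≤ k < |σ(x₀)|`. -/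
def IsCenteredRep (σ : A → List B) (y : ℤ → B) (k : ℤ) (x : ℤ → A) : Prop :=
  IsRep σ y k x ∧ 0 ≤ k ∧ k < ((σ (x 0)).length : ℤ)

/-- `y` is aperiodic: `T^p y ≠ y` for all `p ≥ 1`. -/
def Aperiodic (y : ℤ → B) : Prop := ∀ p : ℕ, 1 ≤ p → (fun n => y (n + p)) ≠ y

/-- `y` is periodic: `T^p y = y` for some `p ≥ 1`. -/
def Periodic (y : ℤ → B) : Prop := ∃ p : ℕ, 1 ≤ p ∧ (fun n => y (n + p)) = y

/-- The set of `σ`-cutting points of the representation `(k, x)`. -/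
def cutSet (σ : A → List B) (x : ℤ → A) (k : ℤ) : Set ℤ :=
  {m : ℤ | ∃ ℓ : ℤ, m = cut σ x ℓ - k}

/-- `σ` is recognizable in `X`: every `y` has at most one centered `σ`-representation in `X`. -/
def RecIn (σ : A → List B) (X : Set (ℤ → A)) : Prop :=
  ∀ (y : ℤ → B) (k k' : ℤ) (x x' : ℤ → A), x ∈ X → x' ∈ X →
    IsCenteredRep σ y k x → IsCenteredRep σ y k' x' → k = k' ∧ x = x'

/-- `σ` is recognizable in `X` for aperiodic points. -/
def RecInAp (σ : A → List B) (X : Set (ℤ → A)) : Prop :=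
  ∀ y : ℤ → B, Aperiodic y → ∀ (k k' : ℤ) (x x' : ℤ → A), x ∈ X → x' ∈ X →
    IsCenteredRep σ y k x → IsCenteredRep σ y k' x' → k = k' ∧ x = x'

/-- `σ` is left permutative: the first letters of `σ a` and `σ b` differ for distinct `a, b`. -/
def LeftPermutative (σ : A → List B) : Prop :=
  ∀ a b : A, a ≠ b → (σ a).head? ≠ (σ b).head?

/-- `σ` is right permutative: the last letters of `σ a` and `σ b` differ for distinct `a, b`. -/
def RightPermutative (σ : A → List B) : Prop :=
  ∀ a b : A, a ≠ b → (σ a).getLast? ≠ (σ b).getLast?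

/-- `σ` and `σ'` are rotationally conjugate. -/
def RotConj (σ σ' : A → List B) : Prop :=
  ∃ w : List B, (∀ a, σ a ++ w = w ++ σ' a) ∨ (∀ a, w ++ σ a = σ' a ++ w)

/-- The incidence matrix of `σ`, over `ℚ`: entry `(b, a)` counts occurrences of `b` in `σ a`. -/
noncomputable def incidence (σ : A → List B) [DecidableEq B] : Matrix B A ℚ :=
  Matrix.of fun b a => ((σ a).count b : ℚ)

/-- The finite subword `x_[i, i+m)` of a bi-infinite sequence. -/
def factor (x : ℤ → A) (i : ℤ) (m : ℕ) : List A := (List.range m).map fun j => x (i + j)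

/-- The language of a bi-infinite sequence: the set of its finite subwords. -/
def lang (x : ℤ → A) : Set (List A) := {w | ∃ (i : ℤ) (m : ℕ), w = factor x i m}

/-- `σ` is injective on bi-infinite sequences. -/
def InjZ (σ : A → List B) : Prop :=
  ∀ (x x' : ℤ → A) (y : ℤ → B), IsSubstPt σ x y → IsSubstPt σ x' y → x = x'

/-- Cutting points for one-sided sequences. -/
def cutN (σ : A → List B) (x : ℕ → A) (ℓ : ℕ) : ℕ :=
  ∑ i ∈ Finset.range ℓ, (σ (x i)).length

/-- `y` is the one-sided image `σ(x)` for `x : ℕ → A`. -/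
def IsSubstPtN (σ : A → List B) (x : ℕ → A) (y : ℕ → B) : Prop :=
  ∀ (ℓ j : ℕ) (hj : j < (σ (x ℓ)).length),
    y (cutN σ x ℓ + j) = (σ (x ℓ)).get ⟨j, hj⟩

/-- `σ` is injective on one-sided (right-infinite) sequences. -/
def InjN (σ : A → List B) : Prop :=
  ∀ (x x' : ℕ → A) (y : ℕ → B), IsSubstPtN σ x y → IsSubstPtN σ x' y → x = x'

/-- The total length `⦀σ⦀ = Σ_a |σ a|`. -/
def totalLen (σ : A → List B) [Fintype A] : ℕ := ∑ a, (σ a).length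

/-- `X` is invariant under the two-sided shift. -/
def ShiftInvariant (X : Set (ℤ → A)) : Prop :=
  ∀ x ∈ X, (fun n => x (n + 1)) ∈ X ∧ (fun n => x (n - 1)) ∈ X

/-- The iterate `σ^n` of a substitution, applied to a letter. -/
def iter (σ : A → List A) : ℕ → A → List A
  | 0, a => [a]
  | n + 1, a => wordApply (iter σ n) (σ a)

/-- The language `ℒ_σ` of a substitution: subwords of the `σ^n(a)`. -/
def subLang (σ : A → List A) : Set (List A) := {w | ∃ (n : ℕ) (a : A), w <:+: iter σ n a}

/-- The substitutive shift `X_σ`. -/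
def subX (σ : A → List A) : Set (ℤ → A) := {x | ∀ w ∈ lang x, w ∈ subLang σ}

/-- `σ` is recognizable in the sense of Mossé for `x`. -/
def MosseRec (σ : A → List B) (x : ℤ → A) : Prop :=
  ∃ ℓ : ℕ, ∀ y : ℤ → B, IsSubstPt σ x y →
    ∀ m ∈ cutSet σ x 0, ∀ m' : ℤ,
      factor y (m - ℓ) (2 * ℓ) = factor y (m' - ℓ) (2 * ℓ) → m' ∈ cutSet σ x 0

section Sadic

variable {𝒜 : ℕ → Type*}

/-- `block σ N = σ_[0,N)`, mapping a letter of `𝒜 N` to a word over `𝒜 0`. -/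
def block (σ : ∀ n, 𝒜 (n + 1) → List (𝒜 n)) : ∀ N, 𝒜 N → List (𝒜 0)
  | 0, a => [a]
  | N + 1, a => wordApply (block σ N) (σ N a)

/-- `blockFrom σ n k = σ_[n,n+k)`, mapping a letter of `𝒜 (n+k)` to a word over `𝒜 n`. -/
def blockFrom (σ : ∀ n, 𝒜 (n + 1) → List (𝒜 n)) (n k : ℕ) : 𝒜 (n + k) → List (𝒜 n) :=
  block (𝒜 := fun m => 𝒜 (n + m)) (fun m => σ (n + m)) k

/-- The language `ℒ^(n)_σ` of a directive sequence. -/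
def sadicLang (σ : ∀ n, 𝒜 (n + 1) → List (𝒜 n)) (n : ℕ) : Set (List (𝒜 n)) :=
  {w | ∃ (k : ℕ) (a : 𝒜 (n + k)), 1 ≤ k ∧ w <:+: blockFrom σ n k a}

/-- The shift `X^(n)_σ` of a directive sequence. -/
def sadicX (σ : ∀ n, 𝒜 (n + 1) → List (𝒜 n)) (n : ℕ) : Set (ℤ → 𝒜 n) :=
  {x | ∀ w ∈ lang x, w ∈ sadicLang σ n}

/-- A directive sequence is everywhere growing if `min_a |σ_[0,n)(a)| → ∞`. -/
def EverywhereGrowing (σ : ∀ n, 𝒜 (n + 1) → List (𝒜 n)) : Prop :=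
  ∀ m : ℕ, ∃ N : ℕ, ∀ n ≥ N, ∀ a : 𝒜 n, m ≤ (block σ n a).length

end Sadic

end Recog

/-!
Shifting `x` by `ℓ` shifts `σ(x)` by the cutting point `cut σ x ℓ`, so the two representations
exhibit `y` as `T^k σ(x)` and as `T^(k' + cut σ x ℓ) σ(x)`. Aperiodicity forces
`cut σ x ℓ = k - k'`, a number in `(-|σ(x_ℓ)|, |σ(x₀)|)`; since the cutting points strictly
increase with `ℓ`, this interval contains only `cut σ x 0 = 0`, whence `ℓ = 0` and `k = k'`.
-/

namespace Recog

variable {A B : Type*} (σ : A → List B)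

lemma cut_zero (x : ℤ → A) : cut σ x 0 = 0 := by simp [cut]

lemma cut_succ (x : ℤ → A) (ℓ : ℤ) :
    cut σ x (ℓ + 1) = cut σ x ℓ + ((σ (x ℓ)).length : ℤ) := by
  rcases le_or_gt 0 ℓ with h | h
  · have ht : (ℓ + 1).toNat = ℓ.toNat + 1 := by omega
    simp only [cut, if_pos h, if_pos (by omega : (0 : ℤ) ≤ ℓ + 1), ht, Finset.sum_range_succ,
      Int.toNat_of_nonneg h]
  · obtain h1 | h1 := eq_or_lt_of_le (by omega : ℓ + 1 ≤ 0)
    · obtain rfl : ℓ = -1 := by omega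
      simp [cut]
    · have ht : (-ℓ).toNat = (-(ℓ + 1)).toNat + 1 := by omega
      have harg : -((-(ℓ + 1)).toNat : ℤ) - 1 = ℓ := by omega
      simp only [cut, if_neg (by omega : ¬(0 : ℤ) ≤ ℓ + 1), if_neg (by omega : ¬(0 : ℤ) ≤ ℓ), ht,
        Finset.sum_range_succ, harg]
      ring

lemma cut_monotone (x : ℤ → A) : Monotone (cut σ x) :=
  monotone_int_of_le_succ fun ℓ => by rw [cut_succ]; omega

lemma sub_le_cut_sub (hσ : NonErasing σ) (x : ℤ → A) {m n : ℤ} (hmn : m ≤ n) :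
    n - m ≤ cut σ x n - cut σ x m := by
  induction n, hmn using Int.leInduction with
  | base => simp
  | succ n _ ih =>
    have := List.length_pos_iff.mpr (hσ (x n))
    rw [cut_succ]
    omega

lemma exists_cut_le_lt_cut_succ (hσ : NonErasing σ) (x : ℤ → A) (n : ℤ) :
    ∃ ℓ, cut σ x ℓ ≤ n ∧ n < cut σ x (ℓ + 1) := by
  have hbdd : ∃ b : ℤ, ∀ z, cut σ x z ≤ n → z ≤ b := by
    refine ⟨max n 0, fun z hz => ?_⟩
    rcases le_or_gt 0 z with h | h
    · have := sub_le_cut_sub σ hσ x h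
      rw [cut_zero] at this
      omega
    · omega
  have hne : ∃ z, cut σ x z ≤ n := by
    have := sub_le_cut_sub σ hσ x (min_le_right n 0)
    rw [cut_zero] at this
    exact ⟨min n 0, by omega⟩
  obtain ⟨ℓ, hℓ, hmax⟩ := Int.exists_greatest_of_bdd hbdd hne
  exact ⟨ℓ, hℓ, not_le.mp fun h => by have := hmax _ h; omega⟩

lemma IsSubstPt.unique (hσ : NonErasing σ) {x : ℤ → A} {z z' : ℤ → B}
    (hz : IsSubstPt σ x z) (hz' : IsSubstPt σ x z') : z = z' := by
  funext n
  obtain ⟨ℓ, h1, h2⟩ := exists_cut_le_lt_cut_succ σ hσ x n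
  rw [cut_succ] at h2
  have hj : (n - cut σ x ℓ).toNat < (σ (x ℓ)).length := by omega
  have hn : n = cut σ x ℓ + ((n - cut σ x ℓ).toNat : ℤ) := by omega
  rw [hn, hz ℓ _ hj, hz' ℓ _ hj]

lemma cut_shift (x : ℤ → A) (ℓ m : ℤ) :
    cut σ (fun i => x (i + ℓ)) m = cut σ x (ℓ + m) - cut σ x ℓ := by
  induction m using Int.induction_on with
  | zero => simp [cut_zero]
  | succ n ih =>
    rw [cut_succ, ih, ← add_assoc, cut_succ, add_comm (n : ℤ) ℓ]
    ring
  | pred n ih =>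
    have h := cut_succ σ (fun i => x (i + ℓ)) (-(n : ℤ) - 1)
    have h' := cut_succ σ x (ℓ + (-(n : ℤ) - 1))
    rw [sub_add_cancel] at h
    rw [add_assoc, sub_add_cancel] at h'
    rw [add_comm _ ℓ] at h
    omega

lemma IsSubstPt.shift {x : ℤ → A} {z : ℤ → B} (hz : IsSubstPt σ x z) (ℓ : ℤ) :
    IsSubstPt σ (fun i => x (i + ℓ)) (fun n => z (n + cut σ x ℓ)) := by
  intro m j hj
  have hpos : cut σ (fun i => x (i + ℓ)) m + j + cut σ x ℓ = cut σ x (m + ℓ) + j := by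
    rw [cut_shift, add_comm ℓ m]; ring
  simp only [hpos]
  exact hz (m + ℓ) j hj

lemma eq_zero_of_cut_mem_Ioo (x : ℤ → A) {ℓ : ℤ}
    (h : cut σ x ℓ ∈ Set.Ioo (-((σ (x ℓ)).length : ℤ)) (σ (x 0)).length) : ℓ = 0 := by
  obtain ⟨hlo, hhi⟩ := h
  rcases lt_trichotomy ℓ 0 with h | h | h
  · have := cut_monotone σ x (show ℓ + 1 ≤ 0 by omega)
    rw [cut_succ, cut_zero] at this
    omega
  · exact h
  · have := cut_monotone σ x (show 0 + 1 ≤ ℓ by omega)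
    rw [cut_succ, cut_zero] at this
    omega

lemma Aperiodic.eq_zero_of_forall_add_eq {y : ℤ → B} (hy : Aperiodic y)
    {d : ℤ} (hd : ∀ n, y (n + d) = y n) : d = 0 := by
  by_contra hd0
  apply hy d.natAbs (by omega)
  funext n
  rcases Int.natAbs_eq d with h | h
  · rw [← h, hd]
  · have := hd (n + d.natAbs)
    rwa [add_assoc, show (d.natAbs : ℤ) + d = 0 by omega, add_zero, eq_comm] at this

end Recog

open Recog in
theorem stmt10_general {A B : Type*}
    (σ : A → List B) (hσ : NonErasing σ) (y : ℤ → B) (hy : Aperiodic y)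
    (k k' : ℤ) (x x' : ℤ → A) (ℓ : ℤ)
    (hx : IsCenteredRep σ y k x) (hx' : IsCenteredRep σ y k' x')
    (hshift : x' = fun i => x (i + ℓ)) :
    k = k' ∧ x = x' := by
  obtain ⟨hrep, hk, hk_lt⟩ := hx
  obtain ⟨hrep', hk', hk'_lt⟩ := hx'
  subst hshift
  have hsame := (IsSubstPt.shift σ hrep ℓ).unique σ hσ hrep'
  have hper : ∀ n, y (n + (cut σ x ℓ - k + k')) = y n := fun n => by
    have := congrFun hsame (n + k')
    simp only [add_sub_cancel_right] at this
    rwa [show n + k' + cut σ x ℓ - k = n + (cut σ x ℓ - k + k') by ring] at this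
  have hcut : cut σ x ℓ = k - k' := by
    have := hy.eq_zero_of_forall_add_eq hper
    omega
  obtain rfl : ℓ = 0 := eq_zero_of_cut_mem_Ioo σ x ⟨by simp at hk'_lt; omega, by omega⟩
  rw [cut_zero] at hcut
  exact ⟨by omega, by simp⟩

open Recog in
/-- An aperiodic point has a unique centered σ-representation along a shift
orbit: two centered representations `(k,x)` and `(k', T^ℓ x)` coincide. -/
theorem stmt10 {A B : Type*} [Fintype A] [Fintype B]
    (σ : A → List B) (hσ : NonErasing σ) (y : ℤ → B) (hy : Aperiodic y)
    (k k' : ℤ) (x x' : ℤ → A) (ℓ : ℤ)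
    (hx : IsCenteredRep σ y k x) (hx' : IsCenteredRep σ y k' x')
    (hshift : x' = fun i => x (i + ℓ)) :
    k = k' ∧ x = x' :=
  stmt10_general σ hσ y hy k k' x x' ℓ hx hx' hshift
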